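/- For every n ≥ 11 and c ≥ 3, the following c-edge-coloured multigraph on n vertices has exactly c·(n-2 choose 2) + 2c edges, satisfies rd(G) = c, and has no proper Hamiltonian path: take a rainbow complete c-edge-coloured multigraph A on n−2 vertices, fix a vertex v of A, add two new vertices v_1 and v_2, and join each of v_1 and v_2 to v by edges of all c colours. -/

import Mathlib

/-!  A `c`-edge-coloured multigraph on a vertex type `V` is modelled as a family
`G : Fin c → SimpleGraph V`, where `G i` is the simple graph formed by the edges
of colour `i` (no two parallel edges of the same colour). -/

/-- Total number of edges of a `c`-edge-coloured multigraph: the sum of the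
numbers of edges of the colour classes. -/
noncomputable def numEdges {V : Type*} {c : ℕ} (G : Fin c → SimpleGraph V) : ℕ :=
  ∑ i : Fin c, (G i).edgeSet.ncard

/-- The rainbow degree of a vertex: the number of distinct colours appearing on
edges incident to it. -/
noncomputable def rainbowDeg {V : Type*} {c : ℕ} (G : Fin c → SimpleGraph V) (x : V) : ℕ :=
  {i : Fin c | ∃ y, (G i).Adj x y}.ncard

/-- The rainbow degree of the multigraph: the minimum rainbow degree over all vertices. -/
noncomputable def minRainbowDeg {V : Type*} {c : ℕ} (G : Fin c → SimpleGraph V) : ℕ :=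
  sInf (Set.range (rainbowDeg G))

/-- The total degree of a vertex: the number of edges incident to it, over all colours. -/
noncomputable def totalDeg {V : Type*} {c : ℕ} (G : Fin c → SimpleGraph V) (x : V) : ℕ :=
  ∑ i : Fin c, ((G i).neighborSet x).ncard

/-- `v 0, v 1, …, v (m-1)`, with edge `k` (joining `v k` and `v (k+1)`) taken in colour
`κ k`, is a proper path on `m` (distinct) vertices: consecutive edges get distinct
colours. -/
def IsProperPathOn {V : Type*} {c : ℕ} (G : Fin c → SimpleGraph V) (m : ℕ)
    (v : ℕ → V) (κ : ℕ → Fin c) : Prop :=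
  Set.InjOn v (Set.Iio m) ∧
  (∀ i, i + 1 < m → (G (κ i)).Adj (v i) (v (i + 1))) ∧
  (∀ i, i + 2 < m → κ i ≠ κ (i + 1))

/-- `G` has a proper Hamiltonian path: a proper path through all the vertices. -/
def HasProperHamPath {V : Type*} [Fintype V] {c : ℕ} (G : Fin c → SimpleGraph V) : Prop :=
  ∃ (v : ℕ → V) (κ : ℕ → Fin c),
    IsProperPathOn G (Fintype.card V) v κ ∧ ∀ x : V, ∃ i < Fintype.card V, v i = x

/-- `G` has a proper cycle whose vertex set is exactly `S`. -/
def HasProperCycleOn {V : Type*} {c : ℕ} (G : Fin c → SimpleGraph V) (S : Set V) : Prop :=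
  ∃ (m : ℕ) (w : ZMod m → V) (μ : ZMod m → Fin c),
    3 ≤ m ∧ Function.Injective w ∧ Set.range w = S ∧
    (∀ i, (G (μ i)).Adj (w i) (w (i + 1))) ∧
    (∀ i, μ i ≠ μ (i + 1))

/-- A proper path `x_1 y_1 x_2 y_2 … x_q y_q` (on `2q` vertices) compatible with a
set `M` of red edges: its edges are alternately in `M` (these being red) and not
in `M`, beginning and ending with an edge of `M`. -/
def IsCompatiblePath {V : Type*} {c : ℕ} (G : Fin c → SimpleGraph V) (red : Fin c)
    (M : Set (Sym2 V)) (q : ℕ) (w : ℕ → V) (μ : ℕ → Fin c) : Prop :=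
  IsProperPathOn G (2 * q) w μ ∧
  (∀ j, j < q → μ (2 * j) = red ∧ s(w (2 * j), w (2 * j + 1)) ∈ M) ∧
  (∀ j, j + 1 < q → s(w (2 * j + 1), w (2 * j + 2)) ∉ M)

/-! All colour classes are the same graph: a complete graph on `{2, …, n - 1}` with the two
pendant vertices `0` and `1` attached at `2`. Edge count and rainbow degree are then immediate.
A Hamiltonian path has to end at both pendant vertices, because an interior vertex of a path has
two distinct neighbours; so its second and its penultimate vertex are both `2`, which is
impossible once there are at least four vertices. -/

open SimpleGraph

section ConstantColouring

variable {V : Type*} {c : ℕ} (H : SimpleGraph V)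

lemma numEdges_const : numEdges (fun _ : Fin c => H) = c * H.edgeSet.ncard := by
  simp [numEdges]

variable {H}

lemma rainbowDeg_const {x : V} (hx : ∃ y, H.Adj x y) : rainbowDeg (fun _ : Fin c => H) x = c := by
  simp [rainbowDeg, hx]

lemma minRainbowDeg_const [Nonempty V] (hH : ∀ x, ∃ y, H.Adj x y) :
    minRainbowDeg (fun _ : Fin c => H) = c := by
  have hconst : rainbowDeg (fun _ : Fin c => H) = fun _ => c :=
    funext fun x => rainbowDeg_const (hH x)
  rw [minRainbowDeg, hconst, Set.range_const, csInf_singleton]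

end ConstantColouring

namespace IsProperPathOn

variable {V : Type*} {c : ℕ} {G : Fin c → SimpleGraph V} {m : ℕ} {v : ℕ → V} {κ : ℕ → Fin c}
  {w : V}

lemma adj_pred (hp : IsProperPathOn G m v κ) {i : ℕ} (hi0 : 0 < i) (hi : i < m) :
    (G (κ (i - 1))).Adj (v i) (v (i - 1)) := by
  have h := hp.2.1 (i - 1) (by omega)
  rwa [Nat.sub_add_cancel hi0, adj_comm] at h

lemma eq_zero_or_eq_sub_one_of_forall_adj_eq (hp : IsProperPathOn G m v κ) {i : ℕ} (hi : i < m)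
    (hw : ∀ j y, (G j).Adj (v i) y → y = w) : i = 0 ∨ i = m - 1 := by
  by_contra! hend
  have hnext : v (i + 1) = w := hw _ _ (hp.2.1 i (by omega))
  have hprev : v (i - 1) = w := hw _ _ (hp.adj_pred (by omega) hi)
  have := hp.1 (by simp; omega : i + 1 ∈ Set.Iio m) (by simp; omega : i - 1 ∈ Set.Iio m)
    (hnext.trans hprev.symm)
  omega

lemma second_eq_of_forall_adj_eq (hp : IsProperPathOn G m v κ) (hm : 1 < m)
    (hw : ∀ j y, (G j).Adj (v 0) y → y = w) : v 1 = w :=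
  hw _ _ (hp.2.1 0 hm)

lemma penultimate_eq_of_forall_adj_eq (hp : IsProperPathOn G m v κ) (hm : 1 < m)
    (hw : ∀ j y, (G j).Adj (v (m - 1)) y → y = w) : v (m - 2) = w := by
  have h := hw _ _ (hp.adj_pred (by omega : 0 < m - 1) (by omega))
  rwa [Nat.sub_sub] at h

end IsProperPathOn

lemma not_hasProperHamPath_of_forall_adj_eq {V : Type*} [Fintype V] {c : ℕ}
    {G : Fin c → SimpleGraph V} (hV : 4 ≤ Fintype.card V) {a b w : V} (hab : a ≠ b)
    (ha : ∀ j y, (G j).Adj a y → y = w) (hb : ∀ j y, (G j).Adj b y → y = w) :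
    ¬ HasProperHamPath G := by
  rintro ⟨v, κ, hp, hsurj⟩
  set m := Fintype.card V
  obtain ⟨i, hi, rfl⟩ := hsurj a
  obtain ⟨k, hk, rfl⟩ := hsurj b
  have hik : i ≠ k := by rintro rfl; exact hab rfl
  have hends : v 1 = w ∧ v (m - 2) = w := by
    rcases hp.eq_zero_or_eq_sub_one_of_forall_adj_eq hi ha with rfl | rfl <;>
      rcases hp.eq_zero_or_eq_sub_one_of_forall_adj_eq hk hb with rfl | rfl
    · exact absurd rfl hik
    · exact ⟨hp.second_eq_of_forall_adj_eq (by omega) ha,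
        hp.penultimate_eq_of_forall_adj_eq (by omega) hb⟩
    · exact ⟨hp.second_eq_of_forall_adj_eq (by omega) hb,
        hp.penultimate_eq_of_forall_adj_eq (by omega) ha⟩
    · exact absurd rfl hik
  have := hp.1 (by simp; omega : 1 ∈ Set.Iio m) (by simp; omega : m - 2 ∈ Set.Iio m)
    (hends.1.trans hends.2.symm)
  omega

def twoPendantGraph (n : ℕ) : SimpleGraph (Fin n) :=
  SimpleGraph.fromRel
    (fun (u v : Fin n) => (2 ≤ (u : ℕ) ∧ 2 ≤ (v : ℕ)) ∨ ((u : ℕ) < 2 ∧ (v : ℕ) = 2))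

namespace twoPendantGraph

variable {n : ℕ}

lemma adj_iff {u v : Fin n} :
    (twoPendantGraph n).Adj u v ↔ u ≠ v ∧
      (2 ≤ (u : ℕ) ∧ 2 ≤ (v : ℕ) ∨ (u : ℕ) < 2 ∧ (v : ℕ) = 2 ∨ (v : ℕ) < 2 ∧ (u : ℕ) = 2) := by
  rw [twoPendantGraph, fromRel_adj]
  tauto

lemma val_eq_two_of_adj {u v : Fin n} (hu : (u : ℕ) < 2) (h : (twoPendantGraph n).Adj u v) :
    (v : ℕ) = 2 := by
  rw [adj_iff] at h
  omega

lemma exists_adj (hn : 4 ≤ n) (u : Fin n) : ∃ v, (twoPendantGraph n).Adj u v := by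
  by_cases hu : (u : ℕ) = 2
  · exact ⟨⟨3, by omega⟩, adj_iff.mpr ⟨fun h => by simp [h] at hu, by simp; omega⟩⟩
  · exact ⟨⟨2, by omega⟩, adj_iff.mpr ⟨fun h => by simp [h] at hu, by simp; omega⟩⟩

/-- The vertices `2, …, n - 1`, which span the complete part. -/
def coreEmb (n : ℕ) : Fin (n - 2) ↪ Fin n :=
  ⟨fun a => ⟨a + 2, by omega⟩, fun a b h => by simpa [Fin.ext_iff] using h⟩

@[simp] lemma coreEmb_apply_val (a : Fin (n - 2)) : (coreEmb n a : ℕ) = a + 2 := rfl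

lemma map_coreEmb_top_adj {u v : Fin n} :
    ((⊤ : SimpleGraph (Fin (n - 2))).map (coreEmb n)).Adj u v ↔
      u ≠ v ∧ 2 ≤ (u : ℕ) ∧ 2 ≤ (v : ℕ) := by
  refine and_congr_right fun huv => ⟨?_, fun ⟨hu, hv⟩ => ?_⟩
  · rintro ⟨a, b, -, rfl, rfl⟩
    simp
  · refine ⟨⟨u - 2, by omega⟩, ⟨v - 2, by omega⟩, ?_, Fin.ext ?_, Fin.ext ?_⟩
    · simp [Fin.ext_iff]; omega
    all_goals simp; omega

lemma eq_map_top_sup_edge_sup_edge (hn : 3 ≤ n) :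
    twoPendantGraph n = (⊤ : SimpleGraph (Fin (n - 2))).map (coreEmb n) ⊔
      edge ⟨0, by omega⟩ ⟨2, by omega⟩ ⊔ edge ⟨1, by omega⟩ ⟨2, by omega⟩ := by
  ext u v
  simp only [adj_iff, sup_adj, map_coreEmb_top_adj, edge_adj, ne_eq, Fin.ext_iff]
  omega

lemma ncard_edgeSet (hn : 3 ≤ n) : (twoPendantGraph n).edgeSet.ncard = (n - 2).choose 2 + 2 := by
  have hcore := card_edgeFinset_map (coreEmb n) ⊤
  rw [card_edgeFinset_top_eq_card_choose_two, Fintype.card_fin] at hcore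
  rw [eq_map_top_sup_edge_sup_edge hn, ← coe_edgeFinset, Set.ncard_coe_finset,
    card_edgeFinset_sup_edge, card_edgeFinset_sup_edge]
  -- `convert` reconciles the two `Fintype` instances on the edge set of the complete part
  · convert congrArg (· + 1 + 1) hcore
  all_goals simp [edge_adj, Fin.ext_iff]

end twoPendantGraph

theorem stmt19_general {n c : ℕ} (h11 : 11 ≤ n) :
    ∀ G : Fin c → SimpleGraph (Fin n),
      G = (fun _ => SimpleGraph.fromRel
              (fun (u v : Fin n) => (2 ≤ (u : ℕ) ∧ 2 ≤ (v : ℕ)) ∨ ((u : ℕ) < 2 ∧ (v : ℕ) = 2))) →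
      numEdges G = c * (n - 2).choose 2 + 2 * c ∧
      minRainbowDeg G = c ∧ ¬ HasProperHamPath G := by
  rintro G (rfl : G = fun _ => twoPendantGraph n)
  have : Nonempty (Fin n) := ⟨⟨0, by omega⟩⟩
  refine ⟨?_, minRainbowDeg_const (twoPendantGraph.exists_adj (by omega)), ?_⟩
  · rw [numEdges_const, twoPendantGraph.ncard_edgeSet (by omega)]
    ring
  · have pendant : ∀ u : Fin n, (u : ℕ) < 2 →
        ∀ (_ : Fin c) y, (twoPendantGraph n).Adj u y → y = ⟨2, by omega⟩ :=
      fun u hu _ _ h => Fin.ext (twoPendantGraph.val_eq_two_of_adj hu h)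
    exact not_hasProperHamPath_of_forall_adj_eq (a := ⟨0, by omega⟩) (b := ⟨1, by omega⟩)
      (by simp; omega) (by simp) (pendant _ (by simp)) (pendant _ (by simp))

/-- For every `n ≥ 11` and `c ≥ 3`, the `c`-edge-coloured multigraph on
`Fin n` obtained from a rainbow complete `c`-edge-coloured multigraph on the `n - 2`
vertices `A = {2, …, n-1}` by adding the two vertices `0 = v₁` and `1 = v₂`, each joined to
the vertex `2 = v ∈ A` by edges of all `c` colours, has exactly `c·(n-2 choose 2) + 2c`
edges, satisfies `rd(G) = c`, and has no proper Hamiltonian path. -/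
theorem stmt19 {n c : ℕ} (h11 : 11 ≤ n) (hc : 3 ≤ c) :
    ∀ G : Fin c → SimpleGraph (Fin n),
      G = (fun _ => SimpleGraph.fromRel
              (fun (u v : Fin n) => (2 ≤ (u : ℕ) ∧ 2 ≤ (v : ℕ)) ∨ ((u : ℕ) < 2 ∧ (v : ℕ) = 2))) →
      numEdges G = c * (n - 2).choose 2 + 2 * c ∧
      minRainbowDeg G = c ∧ ¬ HasProperHamPath G :=
  stmt19_general h11
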